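/- In a tribe, homotopy equivalences are saturated: a morphism is a homotopy equivalence if and only if it becomes an isomorphism in the homotopy category (the localization of the tribe at homotopy equivalences). Consequently, homotopy equivalences satisfy the 2-out-of-6 property. -/

import Mathlib

/-!
Homotopy is a congruence, so `T` has a quotient category by it, in which the homotopy
equivalences are exactly the isomorphisms. The quotient functor thus inverts homotopy
equivalences and factors through the localization, so every morphism inverted by the
localization is inverted in the quotient, i.e. is a homotopy equivalence. 2-out-of-6 is then
inherited from isomorphisms.

All congruence properties come from one lifting argument: since `P → x × x` is a fibration, a
homotopy extends along any anodyne map. For transitivity it is applied to the section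
`P → P ×ₓ P`, `p ↦ (p, σ (π₁ p))`, which is anodyne by (T4).
-/

open CategoryTheory CategoryTheory.Limits

universe v u

namespace Paper

variable {T : Type u} [Category.{v} T]

/-- A morphism is anodyne (w.r.t. a class of fibrations) if it has the left
lifting property against all fibrations. -/
def Anodyne (Fib : MorphismProperty T) : MorphismProperty T :=
  fun _ _ i => ∀ ⦃u w : T⦄ (g : u ⟶ w), Fib g → HasLiftingProperty i g

/-- A tribe structure on a category `T`. -/
structure TribeStruct (T : Type u) [Category.{v} T] where
  /-- fibrations -/
  Fib : MorphismProperty T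
  fib_id : ∀ x : T, Fib (𝟙 x)
  fib_comp : ∀ {x y z : T} (f : x ⟶ y) (g : y ⟶ z), Fib f → Fib g → Fib (f ≫ g)
  /-- (T1): terminal object, all objects fibrant -/
  term : T
  isTerminal : IsTerminal term
  all_fibrant : ∀ x : T, Fib (isTerminal.from x)
  /-- (T2): pullbacks along fibrations exist and fibrations are stable -/
  pullback_exists : ∀ {x y z : T} (f : x ⟶ z) (g : y ⟶ z), Fib g → HasPullback f g
  fib_stable : ∀ {p x y z : T} {fst : p ⟶ x} {snd : p ⟶ y} {f : x ⟶ z} {g : y ⟶ z},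
    IsPullback fst snd f g → Fib g → Fib fst
  /-- (T3): factorization as anodyne followed by fibration -/
  factor : ∀ {x y : T} (f : x ⟶ y), ∃ (z : T) (i : x ⟶ z) (q : z ⟶ y),
    Anodyne Fib i ∧ Fib q ∧ i ≫ q = f
  /-- (T4): anodyne morphisms are stable under pullback along fibrations -/
  anodyne_stable : ∀ {p x y z : T} {fst : p ⟶ x} {snd : p ⟶ y} {f : x ⟶ z} {g : y ⟶ z},
    IsPullback fst snd f g → Anodyne Fib f → Fib g → Anodyne Fib snd

/-- A path object for `x` in a tribe: a factorization of the diagonal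
`x → x × x` as an anodyne morphism followed by a fibration (the product is
presented by an explicit binary product cone). -/
structure PathObject (R : TribeStruct T) (x : T) where
  P : T
  σ : x ⟶ P
  π₀ : P ⟶ x
  π₁ : P ⟶ x
  σ_anodyne : Anodyne R.Fib σ
  σ_π₀ : σ ≫ π₀ = 𝟙 x
  σ_π₁ : σ ≫ π₁ = 𝟙 x
  prod : T
  p₀ : prod ⟶ x
  p₁ : prod ⟶ x
  isProd : IsLimit (BinaryFan.mk p₀ p₁)
  π : P ⟶ prod
  π_p₀ : π ≫ p₀ = π₀
  π_p₁ : π ≫ p₁ = π₁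
  π_fib : R.Fib π

/-- Homotopy of morphisms in a tribe. -/
def Homotopic (R : TribeStruct T) {x y : T} (f g : x ⟶ y) : Prop :=
  ∃ (Po : PathObject R y) (H : x ⟶ Po.P), H ≫ Po.π₀ = f ∧ H ≫ Po.π₁ = g

/-- Homotopy equivalences in a tribe. -/
def IsHtpyEquiv (R : TribeStruct T) {x y : T} (f : x ⟶ y) : Prop :=
  ∃ g : y ⟶ x, Homotopic R (f ≫ g) (𝟙 x) ∧ Homotopic R (g ≫ f) (𝟙 y)

/-- Homotopy equivalences (= weak equivalences) of a tribe as a morphism property. -/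
def hW (R : TribeStruct T) : MorphismProperty T :=
  fun _ _ f => IsHtpyEquiv R f

end Paper

lemma CategoryTheory.IsIso.two_out_of_six {C : Type*} [Category C] {a b c d : C}
    (f : a ⟶ b) (g : b ⟶ c) (h : c ⟶ d) [IsIso (f ≫ g)] [IsIso (g ≫ h)] :
    IsIso f ∧ IsIso g ∧ IsIso h ∧ IsIso (f ≫ g ≫ h) := by
  have : Mono g := mono_of_mono g h
  have : IsSplitEpi g := IsSplitEpi.mk' ⟨inv (f ≫ g) ≫ f, by simp⟩
  have : IsIso g := isIso_of_mono_of_isSplitEpi g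
  have : IsIso f := IsIso.of_isIso_comp_right f g
  have : IsIso h := IsIso.of_isIso_comp_left g h
  exact ⟨‹_›, ‹_›, ‹_›, inferInstance⟩

lemma CategoryTheory.MorphismProperty.IsInvertedBy.isIso_map_of_isIso_Q_map {C D : Type*}
    [Category C] [Category D] {W : MorphismProperty C} {F : C ⥤ D} (hF : W.IsInvertedBy F)
    {x y : C} (f : x ⟶ y) [IsIso (W.Q.map f)] : IsIso (F.map f) :=
  (NatIso.isIso_map_iff (Localization.fac F hF W.Q) f).1
    (inferInstanceAs (IsIso ((Localization.lift F hF W.Q).map (W.Q.map f))))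

namespace Paper

variable {T : Type u} [Category.{v} T] {R : TribeStruct T}

/-- `j` is the pullback of `s` along the fibration `snd`. -/
lemma anodyne_of_isPullback_of_section {A X Y E : T} {f : A ⟶ X} {r : Y ⟶ X} {s : X ⟶ Y}
    (hs : Anodyne R.Fib s) (hsr : s ≫ r = 𝟙 X) (hf : R.Fib f) {fst : E ⟶ A} {snd : E ⟶ Y}
    (pb : IsPullback fst snd f r) {j : A ⟶ E} (hj₁ : j ≫ fst = 𝟙 A)
    (hj₂ : j ≫ snd = f ≫ s) :
    Anodyne R.Fib j := by
  have outer : IsPullback f (j ≫ fst) (s ≫ r) f := by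
    rw [hj₁, hsr]; exact IsPullback.id_vert f
  exact R.anodyne_stable (outer.of_bot hj₂.symm pb.flip) hs (R.fib_stable pb.flip hf)

lemma exists_pathObject (R : TribeStruct T) (x : T) : Nonempty (PathObject R x) := by
  let t := R.isTerminal.from x
  have := R.pullback_exists t t (R.all_fibrant x)
  obtain ⟨P, σ, π, hσ, hπ, hσπ⟩ :=
    R.factor (pullback.lift (𝟙 x) (𝟙 x) rfl : x ⟶ pullback t t)
  exact ⟨{ P, σ
           π₀ := π ≫ pullback.fst t t
           π₁ := π ≫ pullback.snd t t
           σ_anodyne := hσ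
           σ_π₀ := by rw [← Category.assoc, hσπ, pullback.lift_fst]
           σ_π₁ := by rw [← Category.assoc, hσπ, pullback.lift_snd]
           prod := pullback t t
           p₀ := pullback.fst t t
           p₁ := pullback.snd t t
           isProd := isProductOfIsTerminalIsPullback _ _ _ _ R.isTerminal (pullbackIsPullback t t)
           π, π_p₀ := rfl, π_p₁ := rfl, π_fib := hπ }⟩

namespace PathObject

variable {x : T} (Po : PathObject R x)

lemma fib_π₀ : R.Fib Po.π₀ := by
  have pb : IsPullback Po.p₀ Po.p₁ (R.isTerminal.from x) (R.isTerminal.from x) :=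
    IsPullback.of_isLimit (isPullbackOfIsTerminalIsProduct _ _ _ _ R.isTerminal Po.isProd)
  rw [← Po.π_p₀]
  exact R.fib_comp _ _ Po.π_fib (R.fib_stable pb (R.all_fibrant x))

lemma fib_π₁ : R.Fib Po.π₁ := by
  have pb : IsPullback Po.p₁ Po.p₀ (R.isTerminal.from x) (R.isTerminal.from x) :=
    (IsPullback.of_isLimit
      (isPullbackOfIsTerminalIsProduct _ _ _ _ R.isTerminal Po.isProd)).flip
  rw [← Po.π_p₁]
  exact R.fib_comp _ _ Po.π_fib (R.fib_stable pb (R.all_fibrant x))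

lemma σ_π₀_eq_σ_π₁ : Po.σ ≫ Po.π₀ = Po.σ ≫ Po.π₁ := by
  rw [Po.σ_π₀, Po.σ_π₁]

lemma prod_hom_ext {a : T} {f g : a ⟶ Po.prod} (h₀ : f ≫ Po.p₀ = g ≫ Po.p₀)
    (h₁ : f ≫ Po.p₁ = g ≫ Po.p₁) : f = g :=
  BinaryFan.IsLimit.hom_ext Po.isProd h₀ h₁

end PathObject

def HomotopicVia {x y : T} (Po : PathObject R y) (f g : x ⟶ y) : Prop :=
  ∃ H : x ⟶ Po.P, H ≫ Po.π₀ = f ∧ H ≫ Po.π₁ = g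

lemma HomotopicVia.homotopic {x y : T} {Po : PathObject R y} {f g : x ⟶ y}
    (h : HomotopicVia Po f g) : Homotopic R f g :=
  ⟨Po, h⟩

lemma HomotopicVia.precomp {w x y : T} {Po : PathObject R y} {f g : x ⟶ y}
    (h : HomotopicVia Po f g) (e : w ⟶ x) : HomotopicVia Po (e ≫ f) (e ≫ g) := by
  obtain ⟨H, h₀, h₁⟩ := h
  exact ⟨e ≫ H, by rw [Category.assoc, h₀], by rw [Category.assoc, h₁]⟩

lemma homotopicVia_extend {a b x : T} (Po : PathObject R x) {i : a ⟶ b}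
    (hi : Anodyne R.Fib i) (t : a ⟶ Po.P) {u v : b ⟶ x}
    (hu : t ≫ Po.π₀ = i ≫ u) (hv : t ≫ Po.π₁ = i ≫ v) : HomotopicVia Po u v := by
  obtain ⟨w, hw₀, hw₁⟩ : {w : b ⟶ Po.prod // w ≫ Po.p₀ = u ∧ w ≫ Po.p₁ = v} :=
    BinaryFan.IsLimit.lift' Po.isProd u v
  have sq : CommSq t i Po.π w := ⟨Po.prod_hom_ext
    (by rw [Category.assoc, Category.assoc, Po.π_p₀, hw₀, hu])
    (by rw [Category.assoc, Category.assoc, Po.π_p₁, hw₁, hv])⟩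
  have := hi Po.π Po.π_fib
  exact ⟨sq.lift, by rw [← Po.π_p₀, ← Category.assoc, sq.fac_right, hw₀],
    by rw [← Po.π_p₁, ← Category.assoc, sq.fac_right, hw₁]⟩

lemma homotopicVia_of_anodyne_comp_eq {a b x : T} (Po : PathObject R x) {i : a ⟶ b}
    (hi : Anodyne R.Fib i) {u v : b ⟶ x} (h : i ≫ u = i ≫ v) : HomotopicVia Po u v :=
  homotopicVia_extend Po hi (i ≫ u ≫ Po.σ)
    (by rw [Category.assoc, Category.assoc, Po.σ_π₀, Category.comp_id])
    (by rw [Category.assoc, Category.assoc, Po.σ_π₁, Category.comp_id, h])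

lemma Homotopic.homotopicVia {x y : T} {f g : x ⟶ y} (h : Homotopic R f g)
    (Po : PathObject R y) : HomotopicVia Po f g := by
  obtain ⟨Po', H, h₀, h₁⟩ := h
  have hπ : HomotopicVia Po Po'.π₀ Po'.π₁ :=
    homotopicVia_of_anodyne_comp_eq Po Po'.σ_anodyne Po'.σ_π₀_eq_σ_π₁
  simpa only [h₀, h₁] using hπ.precomp H

lemma Homotopic.refl {x y : T} (f : x ⟶ y) : Homotopic R f f := by
  obtain ⟨Po⟩ := exists_pathObject R y
  exact ⟨Po, f ≫ Po.σ, by rw [Category.assoc, Po.σ_π₀, Category.comp_id],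
    by rw [Category.assoc, Po.σ_π₁, Category.comp_id]⟩

lemma Homotopic.symm {x y : T} {f g : x ⟶ y} (h : Homotopic R f g) : Homotopic R g f := by
  obtain ⟨Po, H, h₀, h₁⟩ := h
  have hπ : HomotopicVia Po Po.π₁ Po.π₀ :=
    homotopicVia_of_anodyne_comp_eq Po Po.σ_anodyne Po.σ_π₀_eq_σ_π₁.symm
  simpa only [h₀, h₁] using (hπ.precomp H).homotopic

lemma Homotopic.trans {x y : T} {f g h : x ⟶ y} (hfg : Homotopic R f g)
    (hgh : Homotopic R g h) : Homotopic R f h := by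
  obtain ⟨Po, K, k₀, k₁⟩ := hgh
  obtain ⟨H, h₀, h₁⟩ := hfg.homotopicVia Po
  have := R.pullback_exists Po.π₁ Po.π₀ Po.fib_π₀
  -- `p ↦ (p, σ (π₁ p))` is anodyne, and extending `𝟙` along it concatenates paths
  have hj : Anodyne R.Fib (pullback.lift (𝟙 Po.P) (Po.π₁ ≫ Po.σ)
      (by rw [Category.id_comp, Category.assoc, Po.σ_π₀, Category.comp_id])) :=
    anodyne_of_isPullback_of_section Po.σ_anodyne Po.σ_π₀ Po.fib_π₁
      (IsPullback.of_hasPullback _ _) (pullback.lift_fst _ _ _) (pullback.lift_snd _ _ _)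
  have hconcat : HomotopicVia Po (pullback.fst Po.π₁ Po.π₀ ≫ Po.π₀)
      (pullback.snd Po.π₁ Po.π₀ ≫ Po.π₁) :=
    homotopicVia_extend Po hj (𝟙 _) (by rw [pullback.lift_fst_assoc, Category.id_comp])
      (by rw [pullback.lift_snd_assoc, Category.id_comp, Category.assoc, Po.σ_π₁,
        Category.comp_id])
  simpa only [pullback.lift_fst_assoc, pullback.lift_snd_assoc, h₀, k₁]
    using (hconcat.precomp (pullback.lift H K (h₁.trans k₀.symm))).homotopic

lemma Homotopic.precomp {w x y : T} {f g : x ⟶ y} (h : Homotopic R f g) (e : w ⟶ x) :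
    Homotopic R (e ≫ f) (e ≫ g) := by
  obtain ⟨Po, hPo⟩ := h
  exact (HomotopicVia.precomp hPo e).homotopic

lemma Homotopic.postcomp {x y z : T} {f g : x ⟶ y} (h : Homotopic R f g) (k : y ⟶ z) :
    Homotopic R (f ≫ k) (g ≫ k) := by
  obtain ⟨Po, H, h₀, h₁⟩ := h
  obtain ⟨Po'⟩ := exists_pathObject R z
  have hπ : HomotopicVia Po' (Po.π₀ ≫ k) (Po.π₁ ≫ k) :=
    homotopicVia_of_anodyne_comp_eq Po' Po.σ_anodyne
      (by rw [← Category.assoc, Po.σ_π₀_eq_σ_π₁, Category.assoc])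
  simpa only [← Category.assoc, h₀, h₁] using (hπ.precomp H).homotopic

def homotopyRel (R : TribeStruct T) : HomRel T := fun _ _ f g => Homotopic R f g

instance : Congruence (homotopyRel R) where
  equivalence := ⟨Homotopic.refl, Homotopic.symm, Homotopic.trans⟩
  comp_left e _ _ h := Homotopic.precomp h e
  comp_right k h := Homotopic.postcomp h k

lemma isHtpyEquiv_iff_isIso_quotient_map {x y : T} (f : x ⟶ y) :
    IsHtpyEquiv R f ↔ IsIso ((Quotient.functor (homotopyRel R)).map f) := by
  let F := Quotient.functor (homotopyRel R)
  have hF {a b : T} (u v : a ⟶ b) : F.map u = F.map v ↔ Homotopic R u v :=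
    Quotient.functor_map_eq_iff _ u v
  constructor
  · rintro ⟨g, hfg, hgf⟩
    exact ⟨F.map g, by rw [← F.map_comp, ← F.map_id, hF]; exact hfg,
      by rw [← F.map_comp, ← F.map_id, hF]; exact hgf⟩
  · intro hf
    obtain ⟨g, hg⟩ := F.map_surjective (inv (F.map f))
    refine ⟨g, (hF _ _).1 ?_, (hF _ _).1 ?_⟩
    · rw [F.map_comp, hg, IsIso.hom_inv_id, F.map_id]
    · rw [F.map_comp, hg, IsIso.inv_hom_id, F.map_id]

lemma hW_isInvertedBy_quotient : (hW R).IsInvertedBy (Quotient.functor (homotopyRel R)) :=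
  fun _ _ f hf => (isHtpyEquiv_iff_isIso_quotient_map f).1 hf

end Paper

open Paper in
/-- In a tribe, homotopy equivalences are saturated: a morphism
is a homotopy equivalence iff it becomes an isomorphism in the localization of
the tribe at the homotopy equivalences.  Consequently homotopy equivalences
satisfy the 2-out-of-6 property. -/
theorem htpyEquiv_saturated {T : Type u} [Category.{v} T] (R : Paper.TribeStruct T) :
    (∀ {x y : T} (f : x ⟶ y), IsHtpyEquiv R f ↔ IsIso ((hW R).Q.map f)) ∧
    (∀ {a b c d : T} (f : a ⟶ b) (g : b ⟶ c) (h : c ⟶ d),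
      IsHtpyEquiv R (f ≫ g) → IsHtpyEquiv R (g ≫ h) →
      IsHtpyEquiv R f ∧ IsHtpyEquiv R g ∧ IsHtpyEquiv R h ∧ IsHtpyEquiv R (f ≫ g ≫ h)) := by
  have saturated {x y : T} (f : x ⟶ y) : IsHtpyEquiv R f ↔ IsIso ((hW R).Q.map f) :=
    ⟨fun hf => Localization.inverts (hW R).Q (hW R) f hf, fun _ =>
      (isHtpyEquiv_iff_isIso_quotient_map f).2
        (hW_isInvertedBy_quotient.isIso_map_of_isIso_Q_map f)⟩
  refine ⟨saturated, fun f g h hfg hgh => ?_⟩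
  simp only [saturated, Functor.map_comp] at hfg hgh ⊢
  exact IsIso.two_out_of_six _ _ _
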